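/- arXiv:1712.09629 — 12 statements merged into one kernel-verified Lean document; each statement's English description precedes it below -/
import Mathlib

section
/- For every nonempty subset S of X with |S| ≤ n, there exists a profile u such that the maximin choice set at u is exactly S. -/
open Finset

/-- The worst (largest) rank of `x` over all individuals, where ranks are
counted from 1 at the top: `n(u,x)`.  A profile assigns to each individual
`i` a rank equivalence `u i : Fin m ≃ Fin m` (lower rank = better). -/
def worstRank {m n : ℕ} (u : Fin n → (Fin m ≃ Fin m)) (x : Fin m) : ℕ :=
  univ.sup (fun i : Fin n => ((u i) x).val + 1)

/-- The maximin choice set `G_M(u)`: alternatives whose worst rank is minimal. -/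
def maximinSet {m n : ℕ} (u : Fin n → (Fin m ≃ Fin m)) : Finset (Fin m) :=
  univ.filter (fun x => ∀ y : Fin m, worstRank u x ≤ worstRank u y)

/-! Let `k = #S ≤ n`. Every individual ranks `S` on the top `k` positions and the other
alternatives below them; individual `i` rotates the order on `S` by `i mod k`. Since `k ≤ n`,
every element of `S` is ranked `k`-th by someone and never lower, so its worst rank is `k`,
while every other alternative has worst rank at least `k + 1`. -/

variable {m n : ℕ}

lemma rank_lt_worstRank (u : Fin n → Fin m ≃ Fin m) (i : Fin n) (x : Fin m) :
    (u i x : ℕ) < worstRank u x :=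
  Nat.lt_of_succ_le (le_sup (f := fun i => (u i x : ℕ) + 1) (mem_univ i))

lemma worstRank_le_iff (u : Fin n → Fin m ≃ Fin m) (x : Fin m) (r : ℕ) :
    worstRank u x ≤ r ↔ ∀ i, (u i x : ℕ) < r := by
  simp only [worstRank, Finset.sup_le_iff, mem_univ, true_imp_iff, Nat.succ_le_iff]

lemma maximinSet_eq_of_worstRank (u : Fin n → Fin m ≃ Fin m) {S : Finset (Fin m)}
    (hS : S.Nonempty) {r : ℕ} (hmem : ∀ x ∈ S, worstRank u x = r)
    (hnot : ∀ x ∉ S, r < worstRank u x) : maximinSet u = S := by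
  ext x
  simp only [maximinSet, mem_filter, mem_univ, true_and]
  constructor
  · intro hmin
    by_contra hx
    obtain ⟨y, hy⟩ := hS
    exact (hmin y).not_gt (hmem y hy ▸ hnot x hx)
  · intro hx y
    rw [hmem x hx]
    by_cases hy : y ∈ S
    · rw [hmem y hy]
    · exact (hnot y hy).le

lemma card_add_sub_card (S : Finset (Fin m)) : S.card + (m - S.card) = m :=
  Nat.add_sub_cancel' (card_le_univ S |>.trans_eq (Fintype.card_fin m))

noncomputable def topRanking (S : Finset (Fin m)) (σ : Equiv.Perm (Fin S.card)) :
    Fin m ≃ Fin m :=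
  (Equiv.sumCompl (· ∈ S)).symm.trans <|
    (Equiv.sumCongr (S.equivFin.trans σ)
      (Fintype.equivFinOfCardEq (by simp [Fintype.card_subtype_compl]))).trans <|
    finSumFinEquiv.trans (finCongr (card_add_sub_card S))

lemma topRanking_apply_of_mem (S : Finset (Fin m)) (σ : Equiv.Perm (Fin S.card)) {x : Fin m}
    (hx : x ∈ S) : (topRanking S σ x : ℕ) = σ (S.equivFin ⟨x, hx⟩) := by
  simp [topRanking, Equiv.sumCompl_symm_apply_of_pos hx]

lemma card_le_topRanking_apply_of_notMem (S : Finset (Fin m)) (σ : Equiv.Perm (Fin S.card))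
    {x : Fin m} (hx : x ∉ S) : S.card ≤ topRanking S σ x := by
  simp [topRanking, Equiv.sumCompl_symm_apply_of_neg hx]

noncomputable def cyclicProfile (S : Finset (Fin m)) [NeZero S.card] : Fin n → Fin m ≃ Fin m :=
  fun i => topRanking S (Equiv.addLeft (Fin.ofNat S.card i))

lemma worstRank_cyclicProfile_of_mem {S : Finset (Fin m)} [NeZero S.card] (hcard : S.card ≤ n)
    {x : Fin m} (hx : x ∈ S) : worstRank (cyclicProfile (n := n) S) x = S.card := by
  refine le_antisymm ((worstRank_le_iff _ _ _).2 fun i => ?_) ?_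
  · rw [cyclicProfile, topRanking_apply_of_mem S _ hx]
    exact Fin.isLt _
  · let last : Fin S.card := ⟨S.card - 1, Nat.sub_one_lt (NeZero.ne _)⟩
    let c := last - S.equivFin ⟨x, hx⟩
    let i : Fin n := ⟨c, c.isLt.trans_le hcard⟩
    have hi : (cyclicProfile S i x : ℕ) = S.card - 1 := by
      rw [cyclicProfile, topRanking_apply_of_mem S _ hx, Fin.ofNat_val_eq_self]
      exact congrArg Fin.val (sub_add_cancel last _)
    have := rank_lt_worstRank (cyclicProfile S) i x
    omega

lemma card_lt_worstRank_cyclicProfile_of_notMem {S : Finset (Fin m)} [NeZero S.card]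
    (hn : 0 < n) {x : Fin m} (hx : x ∉ S) : S.card < worstRank (cyclicProfile (n := n) S) x :=
  (card_le_topRanking_apply_of_notMem S _ hx).trans_lt
    (rank_lt_worstRank (cyclicProfile S) ⟨0, hn⟩ x)

theorem maximin_range_general (m n : ℕ)
    (S : Finset (Fin m)) (hS : S.Nonempty) (hcard : S.card ≤ n) :
    ∃ u : Fin n → (Fin m ≃ Fin m), maximinSet u = S := by
  have hk : 0 < S.card := card_pos.2 hS
  have : NeZero S.card := ⟨hk.ne'⟩
  exact ⟨cyclicProfile S, maximinSet_eq_of_worstRank _ hS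
    (fun _ hx => worstRank_cyclicProfile_of_mem hcard hx)
    (fun _ hx => card_lt_worstRank_cyclicProfile_of_notMem (hk.trans_le hcard) hx)⟩

/-- For every nonempty subset `S` of `X` with `|S| ≤ n`, there is a profile `u`
whose maximin choice set is exactly `S`. -/
theorem maximin_range (m n : ℕ) (hm : 3 ≤ m) (hn : 2 ≤ n)
    (S : Finset (Fin m)) (hS : S.Nonempty) (hcard : S.card ≤ n) :
    ∃ u : Fin n → (Fin m ≃ Fin m), maximinSet u = S :=
  maximin_range_general m n S hS hcard
end

section
/- If n is even, then for every nonempty subset S of X there exists a profile u such that the set of Borda winners at u is exactly S. -/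
/-!
Let `k = |S|`. Rank the alternatives of `S` first and the others after them, and form a second
ranking by reversing each of the two blocks. Over this pair of rankings every alternative of `S`
has ranks summing to `k + 1`, and every other alternative to `k + m + 1`. Giving the first ranking
to half of the `n = 2p > 0` voters and the second to the other half, the Borda scores are
`p (k + 1)` on `S` and `p (k + m + 1)` off `S`, so the Borda winners are exactly `S`.
-/

open Finset

/-- The Borda score `B(x,u) = Σ_i s(x,i,u)`, where `s(x,i,u)` is the rank of `x`
in individual `i`'s ordering, counted from 1 at the top.  A profile assigns to
each individual `i` a rank equivalence `u i : Fin m ≃ Fin m` (lower = better). -/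
def bordaScore {m n : ℕ} (u : Fin n → (Fin m ≃ Fin m)) (x : Fin m) : ℕ :=
  ∑ i : Fin n, (((u i) x).val + 1)

/-- The Borda correspondence `G_B(u)`: alternatives with minimal Borda score. -/
def bordaSet {m n : ℕ} (u : Fin n → (Fin m ≃ Fin m)) : Finset (Fin m) :=
  univ.filter (fun x => ∀ y : Fin m, bordaScore u x ≤ bordaScore u y)

section BlockEquiv

variable {α : Type*} [DecidableEq α] {a b : ℕ} (s : Finset α)

def blockEquiv (e₁ : s ≃ Fin a) (e₂ : {x // x ∉ s} ≃ Fin b) : α ≃ Fin (a + b) :=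
  (Equiv.sumCompl (· ∈ s)).symm.trans ((e₁.sumCongr e₂).trans finSumFinEquiv)

variable {s}

theorem val_blockEquiv_of_mem (e₁ : s ≃ Fin a) (e₂ : {x // x ∉ s} ≃ Fin b) {x : α}
    (hx : x ∈ s) : (blockEquiv s e₁ e₂ x : ℕ) = e₁ ⟨x, hx⟩ := by
  simp [blockEquiv, Equiv.sumCompl_symm_apply_of_pos hx]

theorem val_blockEquiv_of_notMem (e₁ : s ≃ Fin a) (e₂ : {x // x ∉ s} ≃ Fin b) {x : α}
    (hx : x ∉ s) : (blockEquiv s e₁ e₂ x : ℕ) = a + e₂ ⟨x, hx⟩ := by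
  simp [blockEquiv, Equiv.sumCompl_symm_apply_of_neg hx]

theorem val_blockEquiv_add_val_blockEquiv_rev (e₁ : s ≃ Fin a) (e₂ : {x // x ∉ s} ≃ Fin b)
    (x : α) :
    (blockEquiv s e₁ e₂ x : ℕ) + blockEquiv s (e₁.trans Fin.revPerm) (e₂.trans Fin.revPerm) x + 1
      = if x ∈ s then a else a + (a + b) := by
  by_cases hx : x ∈ s
  · have := (e₁ ⟨x, hx⟩).isLt
    simp only [val_blockEquiv_of_mem _ _ hx, Equiv.trans_apply, Fin.revPerm_apply, Fin.val_rev,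
      if_pos hx]
    omega
  · have := (e₂ ⟨x, hx⟩).isLt
    simp only [val_blockEquiv_of_notMem _ _ hx, Equiv.trans_apply, Fin.revPerm_apply, Fin.val_rev,
      if_neg hx]
    omega

end BlockEquiv

theorem exists_equiv_fin_pair_val_add_val {α : Type*} [Fintype α] [DecidableEq α] {m : ℕ}
    (hcard : Fintype.card α = m) (s : Finset α) :
    ∃ σ τ : α ≃ Fin m, ∀ x, (σ x : ℕ) + τ x + 1 = if x ∈ s then #s else #s + m := by
  have hs : Fintype.card s = #s := Fintype.card_coe s
  have hsc : Fintype.card {x // x ∉ s} = m - #s := by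
    rw [Fintype.card_subtype_compl, hcard, Fintype.card_coe]
  have hsm : #s + (m - #s) = m := by
    have := s.card_le_univ; omega
  have e₁ := Fintype.equivFinOfCardEq hs
  have e₂ := Fintype.equivFinOfCardEq hsc
  refine ⟨(blockEquiv s e₁ e₂).trans (finCongr hsm),
    (blockEquiv s (e₁.trans Fin.revPerm) (e₂.trans Fin.revPerm)).trans (finCongr hsm), fun x => ?_⟩
  simp only [Equiv.trans_apply, finCongr_apply, Fin.val_cast]
  rw [val_blockEquiv_add_val_blockEquiv_rev, hsm]

theorem bordaScore_addCases {m a b : ℕ} (u : Fin a → (Fin m ≃ Fin m)) (v : Fin b → (Fin m ≃ Fin m))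
    (x : Fin m) : bordaScore (Fin.addCases u v) x = bordaScore u x + bordaScore v x := by
  simp [bordaScore, Fin.sum_univ_add]

theorem bordaScore_const {m n : ℕ} (σ : Fin m ≃ Fin m) (x : Fin m) :
    bordaScore (fun _ : Fin n => σ) x = n * ((σ x : ℕ) + 1) := by
  simp [bordaScore]

theorem bordaSet_eq_of_forall {m n : ℕ} {u : Fin n → (Fin m ≃ Fin m)} {S : Finset (Fin m)}
    (hS : S.Nonempty) (c : ℕ) (hmem : ∀ x ∈ S, bordaScore u x = c)
    (hnotMem : ∀ x ∉ S, c < bordaScore u x) : bordaSet u = S := by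
  obtain ⟨y, hy⟩ := hS
  ext x
  simp only [bordaSet, mem_filter, mem_univ, true_and]
  constructor
  · intro hmin
    by_contra hx
    exact (hmem y hy ▸ hmin y).not_gt (hnotMem x hx)
  · intro hx z
    by_cases hz : z ∈ S
    · rw [hmem x hx, hmem z hz]
    · exact (hmem x hx).symm ▸ (hnotMem z hz).le

theorem borda_range_even_general (m n : ℕ) (hn : 2 ≤ n) (hne : Even n)
    (S : Finset (Fin m)) (hS : S.Nonempty) :
    ∃ u : Fin n → (Fin m ≃ Fin m), bordaSet u = S := by
  obtain ⟨p, rfl⟩ := hne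
  obtain ⟨σ, τ, hστ⟩ := exists_equiv_fin_pair_val_add_val (Fintype.card_fin m) S
  refine ⟨Fin.addCases (fun _ => σ) (fun _ => τ), ?_⟩
  have hscore : ∀ x, bordaScore (Fin.addCases (fun _ : Fin p => σ) (fun _ : Fin p => τ)) x
      = p * ((if x ∈ S then #S else #S + m) + 1) := by
    intro x
    rw [bordaScore_addCases, bordaScore_const, bordaScore_const, ← hστ]
    ring
  refine bordaSet_eq_of_forall hS (p * (#S + 1)) (fun x hx => by rw [hscore, if_pos hx]) ?_
  intro x hx
  rw [hscore, if_neg hx]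
  have : 0 < m := x.pos
  gcongr <;> omega

/-- If `n` is even then every nonempty subset of `X` is in the range of the
Borda correspondence. -/
theorem borda_range_even (m n : ℕ) (hm : 3 ≤ m) (hn : 2 ≤ n) (hne : Even n)
    (S : Finset (Fin m)) (hS : S.Nonempty) :
    ∃ u : Fin n → (Fin m ≃ Fin m), bordaSet u = S :=
  borda_range_even_general m n hn hne S hS
end

section
/- If n is odd and S is a nonempty subset of X such that either S ≠ X or m is odd, then there exists a profile u with the set of Borda winners at u exactly S. -/
open Finset

/-!
Two voters with mutually reversed rankings give every alternative the same total score `m + 1`,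
so, `n` being odd, all voters but three can be paired off and ignored. It remains to find three
rankings whose rank sums are constant on the top `s = #S` positions and larger below them, and then
to relabel the alternatives so that these positions are occupied by `S`. For odd `s` this is the
classical triple `v, 2t - 2v, v + t` modulo `s = 2t + 1`. For even `s` no three permutations of
the top `s` positions have constant rank sum (it would be the non-integer `3(s - 1)/2`), so the
construction runs modulo `s + 1` and needs an alternative outside `S`.
-/

noncomputable def finPermOfInjOn {m : ℕ} (f : ℕ → ℕ) (hf : Set.MapsTo f (Set.Iio m) (Set.Iio m))
    (hinj : Set.InjOn f (Set.Iio m)) : Equiv.Perm (Fin m) :=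
  Equiv.ofBijective (fun x => ⟨f x, hf x.2⟩)
    (Finite.injective_iff_bijective.mp fun a b h => Fin.ext (hinj a.2 b.2 (congrArg Fin.val h)))

@[simp]
lemma finPermOfInjOn_apply_val {m : ℕ} (f : ℕ → ℕ) (hf : Set.MapsTo f (Set.Iio m) (Set.Iio m))
    (hinj : Set.InjOn f (Set.Iio m)) (x : Fin m) : (finPermOfInjOn f hf hinj x).val = f x :=
  rfl

lemma exists_perm_val_lt_card_iff_mem {m : ℕ} (S : Finset (Fin m)) :
    ∃ r : Equiv.Perm (Fin m), ∀ x, (r x).val < #S ↔ x ∈ S := by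
  have hcard : Fintype.card {x // x ∈ S} = Fintype.card {v : Fin m // v.val < #S} := by
    rw [Fintype.card_coe, Fintype.card_fin_lt_of_le (by simpa using S.card_le_univ)]
  let e : {x // x ∈ S} ≃ {v : Fin m // v.val < #S} := Fintype.equivOfCardEq hcard
  refine ⟨e.extendSubtype, fun x => ⟨fun hx => ?_, e.extendSubtype_mem x⟩⟩
  by_contra hxS
  exact e.extendSubtype_not_mem x hxS hx

lemma bordaSet_eq_of_bordaScore {m n : ℕ} {u : Fin n → (Fin m ≃ Fin m)} {S : Finset (Fin m)}
    {b : ℕ} (hS : S.Nonempty) (hconst : ∀ x ∈ S, bordaScore u x = b)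
    (hlt : ∀ x ∉ S, b < bordaScore u x) : bordaSet u = S := by
  obtain ⟨x₀, hx₀⟩ := hS
  have hmin : ∀ y, b ≤ bordaScore u y := fun y => by
    by_cases hy : y ∈ S
    · exact (hconst y hy).ge
    · exact (hlt y hy).le
  ext x
  simp only [bordaSet, mem_filter, mem_univ, true_and]
  refine ⟨fun hx => ?_, fun hx y => hconst x hx ▸ hmin y⟩
  by_contra hxS
  exact (hlt x hxS).not_ge (hconst x₀ hx₀ ▸ hx x₀)

lemma bordaScore_append {m k l : ℕ} (u : Fin k → (Fin m ≃ Fin m)) (v : Fin l → (Fin m ≃ Fin m))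
    (x : Fin m) : bordaScore (Fin.append u v) x = bordaScore u x + bordaScore v x := by
  simp only [bordaScore, Fin.sum_univ_add, Fin.append_left, Fin.append_right]

lemma bordaSet_append_of_bordaScore_eq_const {m k l : ℕ} {u : Fin k → (Fin m ≃ Fin m)}
    (v : Fin l → (Fin m ≃ Fin m)) {b : ℕ} (hu : ∀ x, bordaScore u x = b) :
    bordaSet (Fin.append u v) = bordaSet v := by
  simp only [bordaSet, bordaScore_append, hu, Nat.add_le_add_iff_left]

lemma mem_bordaSet_trans {m n : ℕ} (r : Fin m ≃ Fin m) (u : Fin n → (Fin m ≃ Fin m)) (x : Fin m) :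
    x ∈ bordaSet (fun i => r.trans (u i)) ↔ r x ∈ bordaSet u := by
  simp only [bordaSet, mem_filter, mem_univ, true_and]
  exact r.forall_congr_right (q := fun y => bordaScore u (r x) ≤ bordaScore u y)

def reversalPairs (m c : ℕ) : Fin (c * 2) → (Fin m ≃ Fin m) :=
  fun i => ![Equiv.refl _, Fin.revPerm] (finProdFinEquiv.symm i).2

lemma bordaScore_reversalPairs (m c : ℕ) (x : Fin m) :
    bordaScore (reversalPairs m c) x = c * (m + 1) := by
  rw [bordaScore, ← finProdFinEquiv.sum_comp, Fintype.sum_prod_type]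
  simp only [reversalPairs, Equiv.symm_apply_apply, Fin.sum_univ_two, Matrix.cons_val_zero,
    Matrix.cons_val_one, Equiv.refl_apply, Fin.revPerm_apply, Fin.val_rev, sum_const, card_univ,
    Fintype.card_fin, smul_eq_mul]
  have := x.isLt
  congr 1
  omega

lemma exists_bordaSet_eq_val_lt_of_injOn {m s b : ℕ} (hs : 0 < s) (hsm : s ≤ m) (f g : ℕ → ℕ)
    (hf : Set.MapsTo f (Set.Iio m) (Set.Iio m)) (hf' : Set.InjOn f (Set.Iio m))
    (hg : Set.MapsTo g (Set.Iio m) (Set.Iio m)) (hg' : Set.InjOn g (Set.Iio m))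
    (hconst : ∀ v < s, v + f v + g v = b) (hlt : ∀ v < m, s ≤ v → b < v + f v + g v) :
    ∃ σ : Fin 3 → (Fin m ≃ Fin m), bordaSet σ = univ.filter fun v : Fin m => v.val < s := by
  have hscore : ∀ v : Fin m, bordaScore ![Equiv.refl _, finPermOfInjOn f hf hf',
      finPermOfInjOn g hg hg'] v = v + f v + g v + 3 := fun v => by
    simp only [bordaScore, Fin.sum_univ_three, Matrix.cons_val_zero, Matrix.cons_val_one,
      Matrix.cons_val_two, Matrix.tail_cons, Matrix.head_cons, Equiv.refl_apply,
      finPermOfInjOn_apply_val]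
    ring
  refine ⟨![Equiv.refl _, finPermOfInjOn f hf hf', finPermOfInjOn g hg hg'],
    bordaSet_eq_of_bordaScore (b := b + 3) ⟨⟨0, by omega⟩, by simp [hs]⟩ ?_ ?_⟩
  · intro v hv
    rw [hscore, hconst v (by simpa using hv)]
  · intro v hv
    rw [hscore]
    have := hlt v v.isLt (by simpa using hv)
    omega

-- Below `s = 2t + 1` the second and third rankings are `2t - 2v` and `v + t` modulo `s`.
lemma exists_bordaSet_eq_val_lt_of_odd {m s : ℕ} (hs : Odd s) (hsm : s ≤ m) :
    ∃ σ : Fin 3 → (Fin m ≃ Fin m), bordaSet σ = univ.filter fun v : Fin m => v.val < s := by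
  obtain ⟨t, rfl⟩ := hs
  refine exists_bordaSet_eq_val_lt_of_injOn (b := 3 * t) (by omega) hsm
    (fun v => if v ≤ t then 2 * t - 2 * v else if v ≤ 2 * t then 4 * t + 1 - 2 * v else v)
    (fun v => if v ≤ t then v + t else if v ≤ 2 * t then v - t - 1 else v)
    ?_ ?_ ?_ ?_ ?_ ?_
  all_goals
    intro v
    intros
    try simp only [Set.mem_Iio] at *
    split_ifs at * <;> omega

-- Up to `2t` the second and third rankings are `2t - 2 - 2v` and `v + t + 1` modulo `2t + 1`:
-- the rank sums are `3t - 1` below `2t` and `5t` at `2t`.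
lemma exists_bordaSet_eq_val_lt_of_even {m s : ℕ} (hs0 : 0 < s) (hs : Even s) (hsm : s < m) :
    ∃ σ : Fin 3 → (Fin m ≃ Fin m), bordaSet σ = univ.filter fun v : Fin m => v.val < s := by
  obtain ⟨t, rfl⟩ := hs
  refine exists_bordaSet_eq_val_lt_of_injOn (b := 3 * t - 1) hs0 hsm.le
    (fun v => if v < t then 2 * t - 2 - 2 * v else if v < 2 * t then 4 * t - 1 - 2 * v else v)
    (fun v => if v < t then v + t + 1 else if v ≤ 2 * t then v - t else v)
    ?_ ?_ ?_ ?_ ?_ ?_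
  all_goals
    intro v
    intros
    try simp only [Set.mem_Iio] at *
    split_ifs at * <;> omega

lemma exists_bordaSet_eq_val_lt {m s : ℕ} (hs0 : 0 < s) (hsm : s ≤ m) (h : s < m ∨ Odd s) :
    ∃ σ : Fin 3 → (Fin m ≃ Fin m), bordaSet σ = univ.filter fun v : Fin m => v.val < s := by
  rcases Nat.even_or_odd s with hs | hs
  · exact exists_bordaSet_eq_val_lt_of_even hs0 hs (h.resolve_right (Nat.not_odd_iff_even.2 hs))
  · exact exists_bordaSet_eq_val_lt_of_odd hs hsm

theorem borda_range_odd_general (m n : ℕ) (hn : 2 ≤ n) (hno : Odd n)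
    (S : Finset (Fin m)) (hS : S.Nonempty) (h : S ≠ univ ∨ Odd m) :
    ∃ u : Fin n → (Fin m ≃ Fin m), bordaSet u = S := by
  obtain ⟨c, rfl⟩ : ∃ c, n = c * 2 + 3 := by
    obtain ⟨k, rfl⟩ := hno
    exact ⟨k - 1, by omega⟩
  have hcard : #S < m ∨ Odd #S := by
    rcases eq_or_ne S univ with rfl | hSu
    · simpa using h
    · exact Or.inl (by simpa using (card_lt_iff_ne_univ S).2 hSu)
  obtain ⟨σ, hσ⟩ := exists_bordaSet_eq_val_lt (card_pos.2 hS) (by simpa using S.card_le_univ) hcard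
  obtain ⟨r, hr⟩ := exists_perm_val_lt_card_iff_mem S
  refine ⟨Fin.append (reversalPairs m c) fun i => r.trans (σ i), ?_⟩
  ext x
  rw [bordaSet_append_of_bordaScore_eq_const _ (bordaScore_reversalPairs m c), mem_bordaSet_trans,
    hσ]
  simp [hr]

/-- If `n` is odd and `S` is a nonempty subset of `X` such that either `S ≠ X`
or `m` is odd, then `S` is in the range of the Borda correspondence. -/
theorem borda_range_odd (m n : ℕ) (hm : 3 ≤ m) (hn : 2 ≤ n) (hno : Odd n)
    (S : Finset (Fin m)) (hS : S.Nonempty) (h : S ≠ univ ∨ Odd m) :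
    ∃ u : Fin n → (Fin m ≃ Fin m), bordaSet u = S :=
  borda_range_odd_general m n hn hno S hS h
end

section
/- If S is a subset of X with |S| = k ≥ 1 and k divides n, then there exists a profile u such that the set of plurality winners at u is exactly S. -/
open Finset

/-- `n_x(u)`: the number of individuals who rank `x` first at profile `u`.
A profile assigns to each individual `i` a rank equivalence
`u i : Fin m ≃ Fin m` (lower rank = better; rank `0` is the top). -/
def pluralityScore {m n : ℕ} (u : Fin n → (Fin m ≃ Fin m)) (x : Fin m) : ℕ :=
  (univ.filter (fun i : Fin n => ((u i) x).val = 0)).card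

/-- The plurality correspondence `G_Pl(u)`: the set of plurality winners. -/
def pluralitySet {m n : ℕ} (u : Fin n → (Fin m ≃ Fin m)) : Finset (Fin m) :=
  univ.filter (fun x => ∀ z : Fin m, pluralityScore u z ≤ pluralityScore u x)

/-- If `S ⊆ X` with `|S| = k ≥ 1` and `k ∣ n`, then `S` is in the range of
plurality rule. -/
theorem plurality_range_dvd (m n : ℕ) (hm : 3 ≤ m) (hn : 2 ≤ n)
    (S : Finset (Fin m)) (hk : 1 ≤ S.card) (hdvd : S.card ∣ n) :
    ∃ u : Fin n → (Fin m ≃ Fin m), pluralitySet u = S := by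
  haveI : NeZero m := ⟨by omega⟩
  set k := S.card with hkdef
  obtain ⟨q, hq⟩ := hdvd
  have hk0 : 0 < k := hk
  have hq0 : 0 < q := by
    rcases Nat.eq_zero_or_pos q with h | h
    · subst h; omega
    · exact h
  let g : Fin k → Fin m := fun j => (S.equivFin.symm j : Fin m)
  have hg_mem : ∀ j, g j ∈ S := fun j => (S.equivFin.symm j).2
  have hg_inj : Function.Injective g := fun a b h =>
    S.equivFin.symm.injective (Subtype.ext h)
  have hg_surj : ∀ x ∈ S, ∃ j, g j = x := fun x hx =>
    ⟨S.equivFin ⟨x, hx⟩, by simp [g]⟩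
  let f : Fin n → Fin m := fun i => g ⟨(i : ℕ) % k, Nat.mod_lt _ hk0⟩
  let u : Fin n → (Fin m ≃ Fin m) := fun i => Equiv.swap (f i) 0
  have hscore : ∀ x, pluralityScore u x
      = ((univ : Finset (Fin n)).filter (fun i : Fin n => f i = x)).card := by
    intro x
    unfold pluralityScore
    congr 1
    apply filter_congr
    intro i _
    simp only [u]
    constructor
    · intro h
      have h0 : Equiv.swap (f i) 0 x = 0 := Fin.ext h
      have : Equiv.swap (f i) 0 x = Equiv.swap (f i) 0 (f i) := by
        rw [h0, Equiv.swap_apply_left]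
      exact ((Equiv.swap (f i) 0).injective this).symm
    · intro h; subst h; simp
  have hcount : ∀ j : ℕ, j < k →
      ((univ : Finset (Fin n)).filter (fun i : Fin n => (i : ℕ) % k = j)).card = q := by
    intro j hj
    have key : ((univ : Finset (Fin n)).filter (fun i : Fin n => (i : ℕ) % k = j)).card
        = (univ : Finset (Fin q)).card := by
      apply Finset.card_bij' (fun (i : Fin n) _ => (⟨(i : ℕ) / k, by
          have := i.isLt
          exact Nat.div_lt_of_lt_mul (by omega)⟩ : Fin q))
        (fun (t : Fin q) _ => (⟨j + k * (t : ℕ), by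
          have h1 : k * ((t : ℕ) + 1) ≤ k * q := Nat.mul_le_mul_left k t.isLt
          have h2 : k * ((t : ℕ) + 1) = k * (t : ℕ) + k := by ring
          omega⟩ : Fin n))
      · intro i hi
        simp only [mem_filter, mem_univ, true_and] at hi
        apply Fin.ext
        simp only []
        conv_rhs => rw [← Nat.mod_add_div (i : ℕ) k, hi]
      · intro t ht
        apply Fin.ext
        simp only []
        rw [Nat.add_mul_div_left _ _ hk0, Nat.div_eq_of_lt hj, Nat.zero_add]
      · intro i hi; exact mem_univ _
      · intro t ht
        simp only [mem_filter, mem_univ, true_and]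
        rw [Nat.add_mul_mod_self_left, Nat.mod_eq_of_lt hj]
    rw [key, Finset.card_fin]
  have hscoreS : ∀ x ∈ S, pluralityScore u x = q := by
    intro x hx
    obtain ⟨j, rfl⟩ := hg_surj x hx
    rw [hscore]
    have heq : ((univ : Finset (Fin n)).filter (fun i : Fin n => f i = g j))
        = ((univ : Finset (Fin n)).filter (fun i : Fin n => (i : ℕ) % k = (j : ℕ))) := by
      apply filter_congr
      intro i _
      constructor
      · intro h
        exact congrArg Fin.val (hg_inj h)
      · intro h
        simp only [f]
        congr 1
        exact Fin.ext h
    rw [heq]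
    exact hcount _ j.2
  have hscoreNS : ∀ x, x ∉ S → pluralityScore u x = 0 := by
    intro x hx
    rw [hscore, Finset.card_eq_zero, Finset.filter_eq_empty_iff]
    intro i _ h
    exact hx (h ▸ hg_mem _)
  refine ⟨u, ?_⟩
  ext x
  simp only [pluralitySet, mem_filter, mem_univ, true_and]
  constructor
  · intro h
    by_contra hx
    have h1 := h (g ⟨0, hk0⟩)
    rw [hscoreS _ (hg_mem _), hscoreNS x hx] at h1
    omega
  · intro hx z
    rw [hscoreS x hx]
    by_cases hz : z ∈ S
    · rw [hscoreS z hz]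
    · rw [hscoreNS z hz]; omega
end

section
/- Let S be a subset of X with |S| = k, where 1 ≤ k < m, and let q = ⌊n/k⌋. If q > ⌈(n − qk)/(m − k)⌉, then there exists a profile u such that the set of plurality winners at u is exactly S. -/
open Finset

/-- Let `S ⊆ X` with `|S| = k`, `1 ≤ k < m`, and `q = ⌊n/k⌋`.  If
`q > ⌈(n − qk)/(m − k)⌉` then `S` is in the range of plurality rule. -/
theorem plurality_range_general (m n : ℕ) (hm : 3 ≤ m) (hn : 2 ≤ n)
    (S : Finset (Fin m)) (k : ℕ) (hcard : S.card = k) (hk : 1 ≤ k) (hkm : k < m)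
    (q : ℕ) (hq : q = n / k)
    (hgap : ⌈((n - q * k : ℕ) : ℚ) / ((m - k : ℕ) : ℚ)⌉ < (q : ℤ)) :
    ∃ u : Fin n → (Fin m ≃ Fin m), pluralitySet u = S := by
  haveI : NeZero m := ⟨by omega⟩
  have hM : 0 < m - k := Nat.sub_pos_of_lt hkm
  have hk0 : 0 < k := hk
  -- q ≥ 1
  have hceil0 : (0 : ℤ) ≤ ⌈((n - q * k : ℕ) : ℚ) / ((m - k : ℕ) : ℚ)⌉ :=
    Int.ceil_nonneg (by positivity)
  have hq1 : 1 ≤ q := by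
    by_contra h
    push_neg at h
    interval_cases q <;> omega
  have hqk : q * k ≤ n := by rw [hq]; exact Nat.div_mul_le_self n k
  -- the remainder bound: n - q*k ≤ (q-1) * (m-k)
  have hr_le : n - q * k ≤ (q - 1) * (m - k) := by
    have h1 : ((n - q * k : ℕ) : ℚ) / ((m - k : ℕ) : ℚ) ≤ ((q : ℚ) - 1) := by
      have h2 := Int.le_ceil (((n - q * k : ℕ) : ℚ) / ((m - k : ℕ) : ℚ))
      have h3 : (⌈((n - q * k : ℕ) : ℚ) / ((m - k : ℕ) : ℚ)⌉ : ℚ) ≤ ((q : ℚ) - 1) := by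
        have : ⌈((n - q * k : ℕ) : ℚ) / ((m - k : ℕ) : ℚ)⌉ ≤ (q : ℤ) - 1 := by omega
        exact_mod_cast this
      linarith
    have hMpos : (0 : ℚ) < ((m - k : ℕ) : ℚ) := by exact_mod_cast hM
    rw [div_le_iff₀ hMpos] at h1
    have h4 : ((n - q * k : ℕ) : ℚ) ≤ (((q - 1) * (m - k) : ℕ) : ℚ) := by
      push_cast [Nat.cast_sub hq1]
      linarith
    exact_mod_cast h4
  -- enumerations of S and its complement
  have hcomp : Sᶜ.card = m - k := by
    rw [card_compl, Fintype.card_fin, hcard]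
  set e : Fin k → Fin m := fun c => (S.orderIsoOfFin hcard c : Fin m) with he_def
  set f : Fin (m - k) → Fin m := fun d => (Sᶜ.orderIsoOfFin hcomp d : Fin m) with hf_def
  have he_mem : ∀ c, e c ∈ S := fun c => (S.orderIsoOfFin hcard c).2
  have hf_mem : ∀ d, f d ∉ S := fun d h => (mem_compl.mp (Sᶜ.orderIsoOfFin hcomp d).2) h
  have he_inj : Function.Injective e :=
    Subtype.coe_injective.comp (S.orderIsoOfFin hcard).injective
  have hf_inj : Function.Injective f :=
    Subtype.coe_injective.comp (Sᶜ.orderIsoOfFin hcomp).injective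
  have he_surj : ∀ x ∈ S, ∃ c, e c = x := by
    intro x hx
    refine ⟨(S.orderIsoOfFin hcard).symm ⟨x, hx⟩, ?_⟩
    simp only [he_def]
    rw [OrderIso.apply_symm_apply]
  have hf_surj : ∀ x, x ∉ S → ∃ d, f d = x := by
    intro x hx
    refine ⟨(Sᶜ.orderIsoOfFin hcomp).symm ⟨x, mem_compl.mpr hx⟩, ?_⟩
    simp only [hf_def]
    rw [OrderIso.apply_symm_apply]
  -- the assignment of each voter's top alternative
  set top : Fin n → Fin m := fun i =>
    if h : i.val < q * k then e ⟨i.val % k, Nat.mod_lt _ hk0⟩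
    else f ⟨(i.val - q * k) % (m - k), Nat.mod_lt _ hM⟩ with htop_def
  set u : Fin n → (Fin m ≃ Fin m) := fun i => Equiv.swap (top i) 0 with hu_def
  -- score computation
  have key : ∀ (t x : Fin m), ((Equiv.swap t 0) x).val = 0 ↔ x = t := by
    intro t x
    constructor
    · intro h
      have h0 : (Equiv.swap t 0) x = 0 := Fin.ext (by simpa using h)
      exact (Equiv.swap t 0).injective (h0.trans (Equiv.swap_apply_left t 0).symm)
    · rintro rfl; simp
  have hscore : ∀ x, pluralityScore u x = (univ.filter fun i => top i = x).card := by
    intro x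
    unfold pluralityScore
    congr 1
    apply filter_congr
    intro i _
    simp only [hu_def, eq_iff_iff, key (top i) x, eq_comm]
  -- score of members of S is q
  have hscoreS : ∀ x ∈ S, pluralityScore u x = q := by
    intro x hx
    obtain ⟨c, rfl⟩ := he_surj x hx
    rw [hscore]
    have hmem : ∀ i : Fin n, top i = e c ↔ i.val < q * k ∧ i.val % k = c.val := by
      intro i
      simp only [htop_def]
      split_ifs with h
      · constructor
        · intro hh
          have := he_inj hh
          exact ⟨h, by simpa using congrArg Fin.val this⟩
        · rintro ⟨-, hh⟩
          congr 1
          exact Fin.ext hh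
      · constructor
        · intro hh
          exact absurd (hh ▸ he_mem c) (hf_mem _)
        · rintro ⟨hh, -⟩
          exact absurd hh h
    have heq : (univ.filter fun i : Fin n => top i = e c) =
        (univ.filter fun i : Fin n => i.val < q * k ∧ i.val % k = c.val) := by
      apply filter_congr; intro i _; exact hmem i
    have hval : (univ.filter fun i : Fin n => i.val < q * k ∧ i.val % k = c.val).card =
        ((range n).filter fun i => i < q * k ∧ i % k = c.val).card := by
      apply Finset.card_bij (fun (i : Fin n) _ => i.val)
      · intro i hi
        simp only [mem_filter, mem_univ, true_and, mem_range] at hi ⊢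
        exact ⟨i.2, hi⟩
      · intro i1 _ i2 _ h
        exact Fin.ext h
      · intro b hb
        simp only [mem_filter, mem_range] at hb
        exact ⟨⟨b, hb.1⟩, by simp only [mem_filter, mem_univ, true_and]; exact hb.2, rfl⟩
    have himg : ((range n).filter fun i => i < q * k ∧ i % k = c.val) =
        (range q).image (fun t => t * k + c.val) := by
      ext i
      simp only [mem_filter, mem_range, mem_image]
      constructor
      · rintro ⟨hin, hlt, hmod⟩
        refine ⟨i / k, (Nat.div_lt_iff_lt_mul hk0).mpr hlt, ?_⟩
        have h := Nat.div_add_mod i k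
        rw [hmod, Nat.mul_comm k (i / k)] at h
        exact h
      · rintro ⟨t, ht, rfl⟩
        have hc := c.2
        have h1 : t * k + c.val < q * k := by
          calc t * k + c.val < (t + 1) * k := by rw [Nat.succ_mul]; omega
          _ ≤ q * k := Nat.mul_le_mul_right k ht
        refine ⟨lt_of_lt_of_le h1 hqk, h1, ?_⟩
        rw [Nat.add_comm, Nat.add_mul_mod_self_right, Nat.mod_eq_of_lt c.2]
    have hinj : Function.Injective (fun t => t * k + c.val) := by
      intro t1 t2 h
      simp only at h
      exact Nat.eq_of_mul_eq_mul_right hk0 (by omega)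
    rw [heq, hval, himg, Finset.card_image_of_injective _ hinj, Finset.card_range]
  -- score of non-members is < q
  have hscoreC : ∀ x, x ∉ S → pluralityScore u x < q := by
    intro x hx
    obtain ⟨d, rfl⟩ := hf_surj x hx
    have hmem : ∀ i : Fin n, top i = f d ↔
        ¬ (i.val < q * k) ∧ (i.val - q * k) % (m - k) = d.val := by
      intro i
      simp only [htop_def]
      split_ifs with h
      · constructor
        · intro hh
          exact absurd (hh ▸ hf_mem d) (fun h2 => h2 (he_mem _))
        · rintro ⟨hh, -⟩
          exact absurd h hh
      · constructor
        · intro hh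
          have := hf_inj hh
          exact ⟨h, by simpa using congrArg Fin.val this⟩
        · rintro ⟨-, hh⟩
          congr 1
          exact Fin.ext hh
    have heq : (univ.filter fun i : Fin n => top i = f d) =
        (univ.filter fun i : Fin n =>
          ¬ (i.val < q * k) ∧ (i.val - q * k) % (m - k) = d.val) := by
      apply filter_congr; intro i _; exact hmem i
    have hval : (univ.filter fun i : Fin n =>
        ¬ (i.val < q * k) ∧ (i.val - q * k) % (m - k) = d.val).card =
        ((range n).filter fun i => ¬ (i < q * k) ∧ (i - q * k) % (m - k) = d.val).card := by
      apply Finset.card_bij (fun (i : Fin n) _ => i.val)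
      · intro i hi
        simp only [mem_filter, mem_univ, true_and, mem_range] at hi ⊢
        exact ⟨i.2, hi⟩
      · intro i1 _ i2 _ h
        exact Fin.ext h
      · intro b hb
        simp only [mem_filter, mem_range] at hb
        exact ⟨⟨b, hb.1⟩, by simp only [mem_filter, mem_univ, true_and]; exact hb.2, rfl⟩
    have hcle : ((range n).filter
        fun i => ¬ (i < q * k) ∧ (i - q * k) % (m - k) = d.val).card ≤ q - 1 := by
      rw [← Finset.card_range (q - 1)]
      apply Finset.card_le_card_of_injOn (fun i => (i - q * k) / (m - k))
      · intro i hi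
        simp only [mem_coe, mem_filter, mem_range] at hi
        apply Finset.mem_range.mpr
        apply (Nat.div_lt_iff_lt_mul hM).mpr
        calc i - q * k < n - q * k := by omega
        _ ≤ (q - 1) * (m - k) := hr_le
      · intro i1 h1 i2 h2 hdiv
        simp only [mem_coe, mem_filter, mem_range] at h1 h2
        have e1 := Nat.div_add_mod (i1 - q * k) (m - k)
        have e2 := Nat.div_add_mod (i2 - q * k) (m - k)
        simp only at hdiv
        rw [h1.2.2] at e1
        rw [h2.2.2] at e2
        rw [hdiv] at e1
        omega
    rw [hscore, heq, hval]
    omega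
  -- conclude    omega
  -- conclude
  refine ⟨u, ?_⟩
  ext x
  simp only [pluralitySet, mem_filter, mem_univ, true_and]
  constructor
  · intro hall
    by_contra hx
    obtain ⟨y, hy⟩ := Finset.card_pos.mp (by rw [hcard]; exact hk0)
    have h1 := hall y
    rw [hscoreS y hy] at h1
    have h2 := hscoreC x hx
    omega
  · intro hx z
    rw [hscoreS x hx]
    by_cases hz : z ∈ S
    · rw [hscoreS z hz]
    · exact le_of_lt (hscoreC z hz)
end

section
/- If n is odd, then no two-element subset of X is in the range of the top cycle correspondence: there is no profile u and no set S with |S| = 2 such that G_T(u) = S. -/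
open Finset

/-- The simple majority voting relation `x ≽_u y`:
`|{i : x ≻_{u(i)} y}| ≥ |{i : y ≻_{u(i)} x}|`.  A profile assigns to each
individual `i` a rank equivalence `u i : Fin m ≃ Fin m` (lower rank = better),
so `i` prefers `x` to `y` iff `(u i) x < (u i) y`. -/
def majGE {m n : ℕ} (u : Fin n → (Fin m ≃ Fin m)) (x y : Fin m) : Prop :=
  (univ.filter (fun i : Fin n => (u i) y < (u i) x)).card ≤
    (univ.filter (fun i : Fin n => (u i) x < (u i) y)).card

/-- The top cycle `G_T(u)`: the set of alternatives that reach every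
alternative via the transitive closure `R(u)` of the majority relation. -/
def topCycle {m n : ℕ} (u : Fin n → (Fin m ≃ Fin m)) : Set (Fin m) :=
  {x : Fin m | ∀ y : Fin m, Relation.TransGen (majGE u) x y}

/-!
With an odd electorate there are no majority ties, so for distinct `a, b` one of them, say `a`,
beats `b` strictly. The top cycle is closed under reaching it: whatever reaches a member of
`G_T(u)` lies in `G_T(u)`. Since `b ∈ G_T(u)` reaches `a` but not in one step, the path from `b`
to `a` passes through a third alternative, which then lies in `G_T(u)` as well.
-/

theorem Relation.TransGen.exists_ne_ne_of_not_rel {α : Type*} {r : α → α → Prop} {a b : α}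
    (h : Relation.TransGen r b a) (hba : ¬ r b a) :
    ∃ z, z ≠ a ∧ z ≠ b ∧ Relation.TransGen r z a := by
  induction h using Relation.TransGen.head_induction_on with
  | single hba' => exact absurd hba' hba
  | @head x c hxc hca ih =>
    by_cases hcx : c = x
    · subst hcx
      exact ih hba
    · by_cases hc : c = a
      · subst hc
        exact absurd hxc hba
      · exact ⟨c, hc, hcx, hca⟩

section Majority

variable {m n : ℕ} (u : Fin n → (Fin m ≃ Fin m))

theorem card_prefers_add_card_prefers {x y : Fin m} (hxy : x ≠ y) :
    (univ.filter (fun i : Fin n => (u i) x < (u i) y)).card +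
      (univ.filter (fun i : Fin n => (u i) y < (u i) x)).card = n := by
  have hlt_iff : ∀ i, (u i) y < (u i) x ↔ ¬ (u i) x < (u i) y := fun i =>
    ⟨not_lt_of_gt, fun h => (not_lt.mp h).lt_of_ne fun he => hxy ((u i).injective he.symm)⟩
  simp_rw [hlt_iff]
  rw [card_filter_add_card_filter_not, card_univ, Fintype.card_fin]

theorem eq_of_majGE_of_majGE {x y : Fin m} (hno : Odd n) (hxy : majGE u x y)
    (hyx : majGE u y x) : x = y := by
  by_contra hne
  have hsum := card_prefers_add_card_prefers u hne
  rw [le_antisymm hyx hxy] at hsum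
  exact Nat.not_even_iff_odd.mpr hno ⟨_, hsum.symm⟩

theorem mem_topCycle_of_transGen {x z : Fin m} (hzx : Relation.TransGen (majGE u) z x)
    (hx : x ∈ topCycle u) : z ∈ topCycle u :=
  fun y => hzx.trans (hx y)

theorem exists_mem_topCycle_ne_ne {x y : Fin m} (hx : x ∈ topCycle u) (hy : y ∈ topCycle u)
    (hyx : ¬ majGE u y x) : ∃ z ∈ topCycle u, z ≠ x ∧ z ≠ y := by
  obtain ⟨z, hzx, hzy, hz⟩ := (hy x).exists_ne_ne_of_not_rel hyx
  exact ⟨z, mem_topCycle_of_transGen u hz hx, hzx, hzy⟩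

end Majority

theorem topCycle_no_pair_general (m n : ℕ) (hno : Odd n) :
    ¬ ∃ (u : Fin n → (Fin m ≃ Fin m)) (S : Finset (Fin m)),
        S.card = 2 ∧ topCycle u = (S : Set (Fin m)) := by
  rintro ⟨u, S, hS, hT⟩
  obtain ⟨a, b, hab, rfl⟩ := card_eq_two.mp hS
  have hmem : ∀ x, x ∈ topCycle u ↔ x = a ∨ x = b := by simp [hT]
  clear hS hT
  wlog hba : ¬ majGE u b a generalizing a b
  · have hab' : ¬ majGE u a b := fun h => hab (eq_of_majGE_of_majGE u hno h (not_not.mp hba))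
    exact this b a (Ne.symm hab) (fun x => (hmem x).trans or_comm) hab'
  obtain ⟨z, hz, hza, hzb⟩ :=
    exists_mem_topCycle_ne_ne u ((hmem a).mpr (.inl rfl)) ((hmem b).mpr (.inr rfl)) hba
  exact ((hmem z).mp hz).elim hza hzb

/-- If `n` is odd, no two-element set is in the range of the top cycle
correspondence. -/
theorem topCycle_no_pair (m n : ℕ) (hm : 3 ≤ m) (hn : 2 ≤ n) (hno : Odd n) :
    ¬ ∃ (u : Fin n → (Fin m ≃ Fin m)) (S : Finset (Fin m)),
        S.card = 2 ∧ topCycle u = (S : Set (Fin m)) :=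
  topCycle_no_pair_general m n hno
end

section
/- If n is even, then for every nonempty subset S of X there exists a profile u such that the top cycle at u is exactly S. -/
open Finset

/-!
Write `n = 2k`. Let `k` voters rank `S` on top in some fixed order followed by the rest, and
`k` more voters rank `S` on top in the reverse order. Any two alternatives of `S` then tie `k` to `k`, so each
element of `S` is weakly majority-preferred to everything, while every element of `S` beats every
element outside `S` unanimously; hence no majority chain leads from outside `S` into `S`.
-/

open Relation

theorem setOf_forall_transGen_eq {α : Type*} {r : α → α → Prop} {S : Set α} (hS : S.Nonempty)
    (hdom : ∀ x ∈ S, ∀ y, r x y) (hclosed : ∀ x y, r x y → y ∈ S → x ∈ S) :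
    {x | ∀ y, TransGen r x y} = S := by
  ext x
  refine ⟨fun hx => ?_, fun hx y => .single (hdom x hx y)⟩
  obtain ⟨s, hs⟩ := hS
  exact (hx s).closed' (P := (· ∈ S)) (hclosed _ _) hs

section Counting

variable {m n : ℕ}

def prefCount (u : Fin n → (Fin m ≃ Fin m)) (x y : Fin m) : ℕ :=
  #{i | u i x < u i y}

theorem majGE_iff (u : Fin n → (Fin m ≃ Fin m)) (x y : Fin m) :
    majGE u x y ↔ prefCount u y x ≤ prefCount u x y :=
  Iff.rfl

theorem prefCount_append {a b : ℕ} (v : Fin a → (Fin m ≃ Fin m)) (w : Fin b → (Fin m ≃ Fin m))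
    (x y : Fin m) : prefCount (Fin.append v w) x y = prefCount v x y + prefCount w x y := by
  simp only [prefCount, card_filter, Fin.sum_univ_add, Fin.append_left, Fin.append_right]

theorem prefCount_const (p : Fin m ≃ Fin m) (x y : Fin m) :
    prefCount (fun _ : Fin n => p) x y = if p x < p y then n else 0 := by
  by_cases h : p x < p y <;> simp [prefCount, h]

theorem majGE_append_const_of_reverse {k : ℕ} {p q : Fin m ≃ Fin m} {x y : Fin m}
    (hxy : p x < p y ↔ q y < q x) (hyx : p y < p x ↔ q x < q y) :
    majGE (Fin.append (fun _ : Fin k => p) (fun _ : Fin k => q)) x y := by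
  simp only [majGE_iff, prefCount_append, prefCount_const, hxy, hyx]
  exact (add_comm _ _).le

theorem prefCount_eq_zero_of_forall_lt {u : Fin n → (Fin m ≃ Fin m)} {x y : Fin m}
    (h : ∀ i, u i x < u i y) : prefCount u y x = 0 := by
  simpa [prefCount, filter_eq_empty_iff] using fun i => (h i).le

theorem prefCount_eq_of_forall_lt {u : Fin n → (Fin m ≃ Fin m)} {x y : Fin m}
    (h : ∀ i, u i x < u i y) : prefCount u x y = n := by
  simp [prefCount, h]

theorem majGE_of_forall_lt {u : Fin n → (Fin m ≃ Fin m)} {x y : Fin m}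
    (h : ∀ i, u i x < u i y) : majGE u x y := by
  simp [majGE_iff, prefCount_eq_zero_of_forall_lt h]

theorem not_majGE_of_forall_lt {u : Fin n → (Fin m ≃ Fin m)} {x y : Fin m} (hn : 0 < n)
    (h : ∀ i, u i x < u i y) : ¬ majGE u y x := by
  rw [majGE_iff, prefCount_eq_zero_of_forall_lt h, prefCount_eq_of_forall_lt h]
  omega

end Counting

section BlockRanking

variable {m : ℕ} (S : Finset (Fin m)) (e : Equiv.Perm (Fin #S))

/-- Ranks `S` first, in the order given by `e`, then the rest of `Fin m`. -/
noncomputable def blockRanking : Fin m ≃ Fin m :=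
  Equiv.extendSubtype (S.equivFin.trans (e.trans (Fin.castLEquiv (card_finset_fin_le S))))

variable {S} {x y : Fin m}

theorem blockRanking_apply_of_mem (hx : x ∈ S) :
    (blockRanking S e x : ℕ) = e (S.equivFin ⟨x, hx⟩) := by
  simp [blockRanking, Equiv.extendSubtype_apply_of_mem _ _ hx]

theorem card_le_blockRanking_of_notMem (hx : x ∉ S) : #S ≤ blockRanking S e x :=
  not_lt.1 (Equiv.extendSubtype_not_mem (q := fun i : Fin m => (i : ℕ) < #S) _ _ hx)

theorem blockRanking_lt_of_mem_of_notMem (hx : x ∈ S) (hy : y ∉ S) :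
    blockRanking S e x < blockRanking S e y := by
  rw [Fin.lt_def, blockRanking_apply_of_mem e hx]
  exact (e _).isLt.trans_le (card_le_blockRanking_of_notMem e hy)

theorem blockRanking_refl_lt_iff (hx : x ∈ S) (hy : y ∈ S) :
    blockRanking S (Equiv.refl _) x < blockRanking S (Equiv.refl _) y ↔
      blockRanking S Fin.revPerm y < blockRanking S Fin.revPerm x := by
  rw [Fin.lt_def, Fin.lt_def, blockRanking_apply_of_mem _ hx, blockRanking_apply_of_mem _ hy,
    blockRanking_apply_of_mem _ hx, blockRanking_apply_of_mem _ hy, ← Fin.lt_def, ← Fin.lt_def]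
  simp only [Equiv.refl_apply, Fin.revPerm_apply, Fin.rev_lt_rev]

end BlockRanking

theorem topCycle_range_even_general (m n : ℕ) (hn : 2 ≤ n) (hne : Even n)
    (S : Finset (Fin m)) (hS : S.Nonempty) :
    ∃ u : Fin n → (Fin m ≃ Fin m), topCycle u = (S : Set (Fin m)) := by
  obtain ⟨k, rfl⟩ := hne
  let u : Fin (k + k) → (Fin m ≃ Fin m) :=
    Fin.append (fun _ => blockRanking S (Equiv.refl _)) (fun _ => blockRanking S Fin.revPerm)
  have hcross : ∀ x ∈ S, ∀ y ∉ S, ∀ i, u i x < u i y := by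
    intro x hx y hy i
    induction i using Fin.addCases <;> simp only [u, Fin.append_left, Fin.append_right] <;>
      exact blockRanking_lt_of_mem_of_notMem _ hx hy
  refine ⟨u, setOf_forall_transGen_eq (by simpa) (fun x hx y => ?_) (fun x y hxy hy => ?_)⟩
  · by_cases hy : y ∈ S
    · exact majGE_append_const_of_reverse (blockRanking_refl_lt_iff hx hy)
        (blockRanking_refl_lt_iff hy hx)
    · exact majGE_of_forall_lt (hcross x hx y hy)
  · by_contra hx
    exact not_majGE_of_forall_lt (by omega) (hcross y hy x hx) hxy

/-- If `n` is even, every nonempty subset of `X` is in the range of the top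
cycle correspondence. -/
theorem topCycle_range_even (m n : ℕ) (hm : 3 ≤ m) (hn : 2 ≤ n) (hne : Even n)
    (S : Finset (Fin m)) (hS : S.Nonempty) :
    ∃ u : Fin n → (Fin m ≃ Fin m), topCycle u = (S : Set (Fin m)) :=
  topCycle_range_even_general m n hn hne S hS
end

section
/- If n is even, then for every nonempty subset S of X there exists a profile u such that the set of Copeland winners at u is exactly S. -/
open Finset

/-- `x` defeats `y` by simple majority at `u`:
`|{i : x ≻_{u(i)} y}| > |{i : y ≻_{u(i)} x}|`.  A profile assigns to each
individual `i` a rank equivalence `u i : Fin m ≃ Fin m` (lower rank = better),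
so `i` prefers `x` to `y` iff `(u i) x < (u i) y`. -/
def defeats {m n : ℕ} (u : Fin n → (Fin m ≃ Fin m)) (x y : Fin m) : Prop :=
  (univ.filter (fun i : Fin n => (u i) y < (u i) x)).card <
    (univ.filter (fun i : Fin n => (u i) x < (u i) y)).card

instance {m n : ℕ} (u : Fin n → (Fin m ≃ Fin m)) : DecidableRel (defeats u) :=
  fun _ _ => by unfold defeats; infer_instance

/-- The Copeland score of `x` at `u`: the number of alternatives `x` defeats
by simple majority. -/
def copelandScore {m n : ℕ} (u : Fin n → (Fin m ≃ Fin m)) (x : Fin m) : ℕ :=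
  (univ.filter (fun y : Fin m => defeats u x y)).card

/-- The Copeland correspondence `G_C(u)`: alternatives with maximal Copeland
score. -/
def copelandSet {m n : ℕ} (u : Fin n → (Fin m ≃ Fin m)) : Finset (Fin m) :=
  univ.filter (fun x => ∀ z : Fin m, copelandScore u z ≤ copelandScore u x)

/-!
Split the electorate into two halves of equal size. Both halves rank `S` above its complement,
the first half ordering each of the two blocks increasingly and the second decreasingly. A strict
majority for `x` over `y` then needs both halves, so `x` defeats `y` exactly when `x ∈ S` and
`y ∉ S`: members of `S` score `|X \ S|` and everyone else scores `0`.
-/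

open Function OrderDual

theorem exists_equiv_fin_lt_iff_of_injective {α β : Type*} [Fintype α] [LinearOrder β]
    {f : α → β} (hf : Injective f) {k : ℕ} (hk : Fintype.card α = k) :
    ∃ e : α ≃ Fin k, ∀ x y, e x < e y ↔ f x < f y := by
  classical
  let o := Fintype.orderIsoFinOfCardEq (Set.range f) ((Set.card_range_of_injective hf).trans hk)
  exact ⟨(Equiv.ofInjective f hf).trans o.symm.toEquiv, fun x y => o.symm.lt_iff_lt⟩

theorem toLex_lt_and_toLex_toDual_lt_iff {α : Type*} [LinearOrder α] (s : Finset α) (x y : α) :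
    toLex (decide (x ∉ s), x) < toLex (decide (y ∉ s), y) ∧
        toLex (decide (x ∉ s), toDual x) < toLex (decide (y ∉ s), toDual y) ↔
      x ∈ s ∧ y ∉ s := by
  simp only [Prod.Lex.toLex_lt_toLex, toDual_lt_toDual]
  by_cases hx : x ∈ s <;> by_cases hy : y ∈ s <;> simp [hx, hy] <;> exact le_of_lt

def halvesProfile {m h : ℕ} (σ τ : Fin m ≃ Fin m) : Fin (h + h) → Fin m ≃ Fin m :=
  Fin.append (fun _ => σ) (fun _ => τ)

theorem card_filter_halvesProfile {m h : ℕ} (σ τ : Fin m ≃ Fin m) (p : (Fin m ≃ Fin m) → Prop)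
    [DecidablePred p] :
    #{i | p (halvesProfile (h := h) σ τ i)} = (if p σ then h else 0) + (if p τ then h else 0) := by
  rw [card_filter]
  simp only [halvesProfile, Fin.sum_univ_add, Fin.append_left, Fin.append_right,
    sum_const, card_univ, Fintype.card_fin, smul_eq_mul, mul_ite, mul_one, mul_zero]

theorem defeats_halvesProfile_iff {m h : ℕ} (hh : 0 < h) (σ τ : Fin m ≃ Fin m) (x y : Fin m) :
    defeats (halvesProfile (h := h) σ τ) x y ↔ σ x < σ y ∧ τ x < τ y := by
  rw [defeats, card_filter_halvesProfile σ τ (fun e => e y < e x),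
    card_filter_halvesProfile σ τ (fun e => e x < e y)]
  rcases lt_trichotomy (σ x) (σ y) with hσ | hσ | hσ <;>
    rcases lt_trichotomy (τ x) (τ y) with hτ | hτ | hτ <;>
    simp_all [lt_asymm]

section BlockMajority

variable {m n : ℕ} {u : Fin n → Fin m ≃ Fin m} {S : Finset (Fin m)}

theorem copelandScore_eq_of_defeats_iff (hu : ∀ x y, defeats u x y ↔ x ∈ S ∧ y ∉ S)
    (x : Fin m) : copelandScore u x = if x ∈ S then #Sᶜ else 0 := by
  by_cases hx : x ∈ S <;> simp [copelandScore, hu, hx, filter_not, compl_eq_univ_sdiff]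

theorem copelandSet_eq_of_defeats_iff (hS : S.Nonempty)
    (hu : ∀ x y, defeats u x y ↔ x ∈ S ∧ y ∉ S) : copelandSet u = S := by
  ext x
  simp only [copelandSet, mem_filter, mem_univ, true_and, copelandScore_eq_of_defeats_iff hu]
  constructor
  · intro hmax
    by_contra hx
    obtain ⟨s, hs⟩ := hS
    have hSu : S = univ := by simpa [hs, hx] using hmax s
    exact hx (hSu ▸ mem_univ x)
  · intro hx z
    split_ifs <;> simp

end BlockMajority

theorem copeland_range_even_general (m n : ℕ) (hn : 2 ≤ n) (hne : Even n)
    (S : Finset (Fin m)) (hS : S.Nonempty) :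
    ∃ u : Fin n → (Fin m ≃ Fin m), copelandSet u = S := by
  obtain ⟨h, rfl⟩ := hne
  obtain ⟨σ, hσ⟩ := exists_equiv_fin_lt_iff_of_injective
    (f := fun x : Fin m => toLex (decide (x ∉ S), x))
    (fun _ _ hxy => congrArg (fun p => (ofLex p).2) hxy) (Fintype.card_fin m)
  obtain ⟨τ, hτ⟩ := exists_equiv_fin_lt_iff_of_injective
    (f := fun x : Fin m => toLex (decide (x ∉ S), toDual x))
    (fun _ _ hxy => congrArg (fun p => (ofLex p).2) hxy) (Fintype.card_fin m)
  refine ⟨halvesProfile σ τ, copelandSet_eq_of_defeats_iff hS fun x y => ?_⟩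
  rw [defeats_halvesProfile_iff (by omega), hσ, hτ]
  exact toLex_lt_and_toLex_toDual_lt_iff S x y

/-- If `n` is even, every nonempty subset of `X` is in the range of the
Copeland correspondence. -/
theorem copeland_range_even (m n : ℕ) (hm : 3 ≤ m) (hn : 2 ≤ n) (hne : Even n)
    (S : Finset (Fin m)) (hS : S.Nonempty) :
    ∃ u : Fin n → (Fin m ≃ Fin m), copelandSet u = S :=
  copeland_range_even_general m n hn hne S hS
end

section
/- If n is odd and m is even, then there is no profile u such that |G_C(u)| = m; that is, the full set X is not in the range of the Copeland correspondence. -/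
open Finset

/-- If `n` is odd and `m` is even, no profile yields a Copeland choice set of
size `m`: the full set `X` is not in the range of the Copeland
correspondence. -/
theorem copeland_not_m (m n : ℕ) (hm : 3 ≤ m) (hn : 2 ≤ n)
    (hno : Odd n) (hme : Even m) :
    ¬ ∃ u : Fin n → (Fin m ≃ Fin m), (copelandSet u).card = m := by

  rintro ⟨u, hcard⟩
  have huniv : copelandSet u = univ := by
    apply Finset.eq_univ_of_card
    simpa using hcard
  have hall : ∀ x z : Fin m, copelandScore u z ≤ copelandScore u x := by
    intro x z
    have hx : x ∈ copelandSet u := huniv ▸ mem_univ x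
    exact (mem_filter.mp hx).2 z
  have hm0 : 0 < m := by omega
  set x0 : Fin m := ⟨0, hm0⟩ with hx0
  have heq : ∀ x : Fin m, copelandScore u x = copelandScore u x0 :=
    fun x => le_antisymm (hall x0 x) (hall x x0)
  -- exactly one of `defeats u x y`, `defeats u y x` holds for distinct x, y
  have hone : ∀ x y : Fin m, x ≠ y → (defeats u x y ↔ ¬ defeats u y x) := by
    intro x y hxy
    have hab : (univ.filter (fun i : Fin n => (u i) x < (u i) y)).card
        + (univ.filter (fun i : Fin n => (u i) y < (u i) x)).card = n := by
      have hflt : (univ.filter (fun i : Fin n => ¬ (u i) x < (u i) y))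
          = univ.filter (fun i : Fin n => (u i) y < (u i) x) := by
        apply Finset.filter_congr
        intro i _
        have hne : (u i) y ≠ (u i) x := fun h => hxy ((u i).injective h.symm)
        constructor
        · exact fun h => (not_lt.1 h).lt_of_ne hne
        · exact fun h => not_lt.2 h.le
      have hx := Finset.card_filter_add_card_filter_not
        (s := (univ : Finset (Fin n))) (p := fun i : Fin n => (u i) x < (u i) y)
      rw [hflt] at hx
      simpa using hx
    have hne2 : (univ.filter (fun i : Fin n => (u i) x < (u i) y)).card
        ≠ (univ.filter (fun i : Fin n => (u i) y < (u i) x)).card := by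
      intro h
      obtain ⟨k, hk⟩ := hno
      omega
    unfold defeats
    omega
  have hself : ∀ x : Fin m, ¬ defeats u x x := by
    intro x
    unfold defeats
    simp
  -- double counting
  have hsum : ∀ x : Fin m, copelandScore u x
      = ∑ y : Fin m, if defeats u x y then 1 else 0 := by
    intro x
    unfold copelandScore
    rw [Finset.card_filter]
  have hkey : ∀ x y : Fin m,
      ((if defeats u x y then 1 else 0) + (if defeats u y x then 1 else 0) : ℕ)
        = if x = y then 0 else 1 := by
    intro x y
    by_cases hxy : x = y
    · subst hxy
      simp [hself x]
    · have h := hone x y hxy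
      by_cases h1 : defeats u x y
      · simp [h1, h.1 h1, hxy]
      · have h2 : defeats u y x := by tauto
        simp [h1, h2, hxy]
  have h2 : 2 * ∑ x : Fin m, copelandScore u x = m * (m - 1) := by
    have hL : ∑ x : Fin m, ∑ y : Fin m,
        (((if defeats u x y then 1 else 0) + (if defeats u y x then 1 else 0)) : ℕ)
        = 2 * ∑ x : Fin m, copelandScore u x := by
      rw [Finset.sum_congr rfl (fun x _ => Finset.sum_add_distrib)]
      rw [Finset.sum_add_distrib]
      rw [Finset.sum_comm (f := fun x y => if defeats u y x then (1:ℕ) else 0)]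
      rw [Finset.sum_congr rfl (fun x _ => (hsum x).symm)]
      ring
    have hR : ∑ x : Fin m, ∑ y : Fin m,
        (((if defeats u x y then 1 else 0) + (if defeats u y x then 1 else 0)) : ℕ)
        = m * (m - 1) := by
      rw [Finset.sum_congr rfl (fun x _ => Finset.sum_congr rfl (fun y _ => hkey x y))]
      have hinner : ∀ x : Fin m, (∑ y : Fin m, if x = y then 0 else 1) = m - 1 := by
        intro x
        have h1 : (∑ y : Fin m, if x = y then (0:ℕ) else 1)
            = (univ.filter (fun y : Fin m => ¬ x = y)).card := by
          rw [Finset.card_filter]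
          exact Finset.sum_congr rfl (fun y _ => by by_cases h : x = y <;> simp [h])
        have h2 : univ.filter (fun y : Fin m => ¬ x = y) = univ.erase x := by
          ext y
          simp [eq_comm]
        rw [h1, h2, Finset.card_erase_of_mem (mem_univ x)]
        simp
      rw [Finset.sum_congr rfl (fun x _ => hinner x)]
      simp [Finset.card_univ, mul_comm]
    omega
  have hms : ∑ x : Fin m, copelandScore u x = m * copelandScore u x0 := by
    rw [Finset.sum_congr rfl (fun x _ => heq x)]
    simp [Finset.card_univ, mul_comm]
  rw [hms] at h2
  have h3 : m * (2 * copelandScore u x0) = m * (m - 1) := by ring_nf; ring_nf at h2; omega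
  have h4 : 2 * copelandScore u x0 = m - 1 := Nat.eq_of_mul_eq_mul_left hm0 h3
  obtain ⟨k, hk⟩ := hme
  omega
end

section
/- If n is odd and m is odd, then there is no profile u such that |G_C(u)| = m − 1; that is, no set of cardinality m − 1 is in the range of the Copeland correspondence. -/
open Finset

/-- If `n` is odd and `m` is odd, no profile yields a Copeland choice set of
size `m − 1`. -/
theorem copeland_not_m_sub_one (m n : ℕ) (hm : 3 ≤ m) (hn : 2 ≤ n)
    (hno : Odd n) (hmo : Odd m) :
    ¬ ∃ u : Fin n → (Fin m ≃ Fin m), (copelandSet u).card = m - 1 := by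
  rintro ⟨u, hcard⟩
  -- For x ≠ y, the counts sum to n
  have hsum : ∀ x y : Fin m, x ≠ y →
      (univ.filter (fun i : Fin n => (u i) y < (u i) x)).card +
      (univ.filter (fun i : Fin n => (u i) x < (u i) y)).card = n := by
    intro x y hxy
    have := Finset.card_filter_add_card_filter_not
      (s := (univ : Finset (Fin n))) (p := fun i => (u i) y < (u i) x)
    rw [Finset.card_univ, Fintype.card_fin] at this
    have e : (univ.filter (fun i : Fin n => ¬ (u i) y < (u i) x))
        = univ.filter (fun i : Fin n => (u i) x < (u i) y) := by
      apply Finset.filter_congr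
      intro i _
      simp only [not_lt, eq_iff_iff]
      constructor
      · intro h
        refine lt_of_le_of_ne h (fun he => hxy ?_)
        exact (u i).injective he
      · exact le_of_lt
    rw [e] at this
    exact this
  -- completeness: for x ≠ y exactly one of defeats
  have hcomp : ∀ x y : Fin m, x ≠ y → (defeats u x y ∨ defeats u y x) := by
    intro x y hxy
    have h := hsum x y hxy
    rcases lt_trichotomy
        ((univ.filter (fun i : Fin n => (u i) y < (u i) x)).card)
        ((univ.filter (fun i : Fin n => (u i) x < (u i) y)).card) with h1 | h1 | h1
    · exact Or.inl h1
    · exfalso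
      rw [h1] at h
      rcases hno with ⟨k, hk⟩
      omega
    · exact Or.inr h1
  have hkey : ∀ x y : Fin m, x ≠ y →
      ((if defeats u x y then (1:ℕ) else 0) + (if defeats u y x then 1 else 0)) = 1 := by
    intro x y hxy
    rcases hcomp x y hxy with h | h
    · have h2 : ¬ defeats u y x := not_lt_of_gt h
      simp [h, h2]
    · have h2 : ¬ defeats u x y := not_lt_of_gt h
      simp [h, h2]
  -- total sum of scores
  have hTot : 2 * ∑ x : Fin m, copelandScore u x = m * (m - 1) := by
    have h2 : ∑ x : Fin m, copelandScore u x
        = ∑ x : Fin m, ∑ y : Fin m, if defeats u x y then (1:ℕ) else 0 :=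
      Finset.sum_congr rfl (fun x _ => by rw [copelandScore, Finset.card_filter])
    rw [two_mul, h2]
    nth_rewrite 2 [Finset.sum_comm]
    rw [← Finset.sum_add_distrib]
    have h3 : ∀ x : Fin m,
        ((∑ y : Fin m, if defeats u x y then (1:ℕ) else 0)
          + (∑ y : Fin m, if defeats u y x then (1:ℕ) else 0)) = m - 1 := by
      intro x
      rw [← Finset.sum_add_distrib]
      have h4 : ∀ y : Fin m, ((if defeats u x y then (1:ℕ) else 0)
          + (if defeats u y x then 1 else 0)) = if y = x then 0 else 1 := by
        intro y
        by_cases hyx : y = x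
        · subst hyx
          have h5 : ¬ defeats u y y := lt_irrefl _
          simp [h5]
        · rw [if_neg hyx]
          exact hkey x y (fun h => hyx h.symm)
      rw [Finset.sum_congr rfl (fun y _ => h4 y)]
      have e1 : (∑ y : Fin m, if y = x then (0:ℕ) else 1)
          = (univ.filter (fun y : Fin m => ¬ (y = x))).card := by
        rw [Finset.card_filter]
        refine Finset.sum_congr rfl (fun y _ => ?_)
        by_cases h : y = x <;> simp [h]
      rw [e1]
      have e2 : (univ.filter (fun y : Fin m => ¬ (y = x))) = univ.erase x := by
        ext y; simp [Finset.mem_erase, and_comm]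
      rw [e2, Finset.card_erase_of_mem (Finset.mem_univ x), Finset.card_univ,
        Fintype.card_fin]
    rw [Finset.sum_congr rfl (fun x _ => h3 x), Finset.sum_const, Finset.card_univ,
      Fintype.card_fin, smul_eq_mul]
  -- the unique non-winner z
  have hcompl : ((copelandSet u)ᶜ : Finset (Fin m)).card = 1 := by
    rw [Finset.card_compl, hcard, Fintype.card_fin]
    omega
  obtain ⟨z, hz⟩ := Finset.card_eq_one.mp hcompl
  have hzmem : z ∉ copelandSet u := by
    have : z ∈ ((copelandSet u)ᶜ : Finset (Fin m)) := hz ▸ Finset.mem_singleton_self z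
    exact Finset.mem_compl.mp this
  have hall : ∀ w : Fin m, w ≠ z → w ∈ copelandSet u := by
    intro w hw
    by_contra hwc
    have : w ∈ ((copelandSet u)ᶜ : Finset (Fin m)) := Finset.mem_compl.mpr hwc
    rw [hz, Finset.mem_singleton] at this
    exact hw this
  -- pick a maximal element
  have hne : (copelandSet u).Nonempty := by
    rw [← Finset.card_pos, hcard]; omega
  obtain ⟨a, ha⟩ := hne
  set s := copelandScore u a with hs
  have hamax : ∀ w : Fin m, copelandScore u w ≤ s := by
    have := (Finset.mem_filter.mp ha).2
    exact this
  have heq : ∀ b ∈ copelandSet u, copelandScore u b = s := by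
    intro b hb
    have hb2 := (Finset.mem_filter.mp hb).2
    exact le_antisymm (hamax b) (hb2 a)
  -- score of z is < s
  have hzlt : copelandScore u z < s := by
    by_contra hzs
    push_neg at hzs
    apply hzmem
    rw [copelandSet, Finset.mem_filter]
    exact ⟨Finset.mem_univ z, fun w => le_trans (hamax w) hzs⟩
  -- split the sum
  have hsplit : ∑ x : Fin m, copelandScore u x = (m - 1) * s + copelandScore u z := by
    rw [← Finset.sum_add_sum_compl (copelandSet u) (copelandScore u), hz,
      Finset.sum_singleton]
    congr 1
    rw [Finset.sum_congr rfl heq, Finset.sum_const, hcard, smul_eq_mul]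
  rw [hsplit] at hTot
  -- arithmetic contradiction
  obtain ⟨k, hk⟩ := hmo
  have hk1 : 1 ≤ k := by omega
  set t := copelandScore u z
  have hE : 2 * k * s + t = 2 * k ^ 2 + k := by
    have : m - 1 = 2 * k := by omega
    rw [this] at hTot
    nlinarith [hTot]
  have h1 : (2 * k + 1) * k < (2 * k + 1) * s := by nlinarith [hE, hzlt]
  have h2 : k < s := Nat.lt_of_mul_lt_mul_left h1
  nlinarith [hE, h2, hk1]
end

section
/- If n is odd with n ≥ 3 and m is odd, then there exists a profile u at which every alternative has Copeland score (m − 1)/2; consequently G_C(u) = X, so the set of all m alternatives is in the range of the Copeland correspondence. -/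
open Finset

set_option maxHeartbeats 1000000 in
/-- If `n` is odd with `n ≥ 3` and `m` is odd, there is a profile at which
every alternative has Copeland score `(m − 1)/2`, and hence the Copeland
choice set is all of `X`. -/
theorem copeland_full_range_m_odd (m n : ℕ) (hm : 3 ≤ m) (hno : Odd n)
    (hn : 3 ≤ n) (hmo : Odd m) :
    ∃ u : Fin n → (Fin m ≃ Fin m),
      (∀ x : Fin m, copelandScore u x = (m - 1) / 2) ∧ copelandSet u = univ := by
  obtain ⟨k, hk⟩ := hmo
  have hk' : m = 2 * k + 1 := by omega
  obtain ⟨t, ht⟩ := hno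
  have hh : ∃ h : ℕ, n = 2 * h + 3 := ⟨t - 1, by omega⟩
  obtain ⟨h, hn'⟩ := hh
  -- second voter: rotation by k
  have hbound2 : ∀ a : ℕ, a < m → (if a ≤ k then a + k else a - (k + 1)) < m := by
    intro a ha; split <;> omega
  set perm2 : Fin m ≃ Fin m :=
    Equiv.ofBijective
      (fun x : Fin m => (⟨if x.1 ≤ k then x.1 + k else x.1 - (k + 1), hbound2 _ x.isLt⟩ : Fin m))
      (Finite.injective_iff_bijective.mp (by
        intro a b hab
        have h1 := a.isLt; have h2 := b.isLt
        simp only [Fin.mk.injEq] at hab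
        apply Fin.ext
        split_ifs at hab <;> omega)) with hperm2
  -- third voter: interleaving order
  have hbound3 : ∀ a : ℕ, a < m → (if a ≤ k then 2 * (k - a) else 2 * (2 * k - a) + 1) < m := by
    intro a ha; split <;> omega
  set perm3 : Fin m ≃ Fin m :=
    Equiv.ofBijective
      (fun x : Fin m =>
        (⟨if x.1 ≤ k then 2 * (k - x.1) else 2 * (2 * k - x.1) + 1, hbound3 _ x.isLt⟩ : Fin m))
      (Finite.injective_iff_bijective.mp (by
        intro a b hab
        have h1 := a.isLt; have h2 := b.isLt
        simp only [Fin.mk.injEq] at hab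
        apply Fin.ext
        split_ifs at hab <;> omega)) with hperm3
  set v : ℕ → (Fin m ≃ Fin m) := fun j =>
    if j = 0 then Equiv.refl _
    else if j = 1 then perm2
    else if j = 2 then perm3
    else if j < 3 + h then Equiv.refl _
    else Fin.revPerm with hv
  set u : Fin n → (Fin m ≃ Fin m) := fun i => v i.1 with hu
  -- counting the supporters of x over y
  have cardEq : ∀ x y : Fin m, x ≠ y →
      (univ.filter fun i : Fin n => (u i) x < (u i) y).card =
      ((if x < y then 1 else 0) + (if perm2 x < perm2 y then 1 else 0) +
        (if perm3 x < perm3 y then 1 else 0)) + ((if x < y then h else 0) +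
        (if y < x then h else 0)) := by
    intro x y hxy
    rw [Finset.card_filter]
    rw [Fin.sum_univ_eq_sum_range (fun j => if (v j) x < (v j) y then 1 else 0) n]
    rw [Finset.range_eq_Ico,
      ← Finset.sum_Ico_consecutive _ (show 0 ≤ 3 + h by omega) (show 3 + h ≤ n by omega),
      ← Finset.sum_Ico_consecutive _ (show 0 ≤ 3 by omega) (show 3 ≤ 3 + h by omega)]
    have e1 : ∑ j ∈ Finset.Ico 0 3, (if (v j) x < (v j) y then 1 else 0) =
        (if x < y then 1 else 0) + (if perm2 x < perm2 y then 1 else 0) +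
          (if perm3 x < perm3 y then 1 else 0) := by
      rw [← Finset.range_eq_Ico]
      rw [Finset.sum_range_succ, Finset.sum_range_succ, Finset.sum_range_one]
      norm_num [hv]
    have e2 : ∑ j ∈ Finset.Ico 3 (3 + h), (if (v j) x < (v j) y then 1 else 0) =
        (if x < y then h else 0) := by
      have hc : ∀ j ∈ Finset.Ico 3 (3 + h),
          (if (v j) x < (v j) y then 1 else 0) = (if x < y then 1 else 0) := by
        intro j hj
        simp only [Finset.mem_Ico] at hj
        have hvj : v j = Equiv.refl _ := by
          simp only [hv]
          rw [if_neg (by omega), if_neg (by omega), if_neg (by omega), if_pos (by omega)]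
        rw [hvj]; rfl
      rw [Finset.sum_congr rfl hc, Finset.sum_const, Nat.card_Ico, smul_eq_mul]
      split <;> omega
    have e3 : ∑ j ∈ Finset.Ico (3 + h) n, (if (v j) x < (v j) y then 1 else 0) =
        (if y < x then h else 0) := by
      have hc : ∀ j ∈ Finset.Ico (3 + h) n,
          (if (v j) x < (v j) y then 1 else 0) = (if y < x then 1 else 0) := by
        intro j hj
        simp only [Finset.mem_Ico] at hj
        have hvj : v j = Fin.revPerm := by
          simp only [hv]
          rw [if_neg (by omega), if_neg (by omega), if_neg (by omega), if_neg (by omega)]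
        rw [hvj]
        simp [Fin.rev_lt_rev]
      rw [Finset.sum_congr rfl hc, Finset.sum_const, Nat.card_Ico, smul_eq_mul]
      split <;> omega
    rw [e1, e2, e3]
    ring
  -- the majority tournament is the cyclic tournament
  have beats_iff : ∀ x y : Fin m, defeats u x y ↔
      ((x.1 < y.1 ∧ y.1 - x.1 ≤ k) ∨ (y.1 < x.1 ∧ k + 1 ≤ x.1 - y.1)) := by
    intro x y
    by_cases hxy : x = y
    · subst hxy
      constructor
      · intro hd; exact absurd hd (lt_irrefl _)
      · intro hd; omega
    · unfold defeats
      rw [cardEq x y hxy, cardEq y x (Ne.symm hxy)]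
      have hx := x.isLt; have hy := y.isLt
      have hne : x.1 ≠ y.1 := fun hc => hxy (Fin.ext hc)
      simp only [hperm2, hperm3, Equiv.ofBijective_apply, Fin.lt_def, Fin.mk_lt_mk]
      split_ifs <;> omega
  have hscore : ∀ x : Fin m, copelandScore u x = (m - 1) / 2 := by
    intro x
    have hx := x.isLt
    unfold copelandScore
    have hfe : (univ.filter fun y : Fin m => defeats u x y) =
        univ.filter (fun y : Fin m =>
          (x.1 < y.1 ∧ y.1 - x.1 ≤ k) ∨ (y.1 < x.1 ∧ k + 1 ≤ x.1 - y.1)) := by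
      apply Finset.filter_congr
      intro y _
      exact beats_iff x y
    rw [hfe, Finset.card_filter]
    rw [Fin.sum_univ_eq_sum_range
      (fun b => if (x.1 < b ∧ b - x.1 ≤ k) ∨ (b < x.1 ∧ k + 1 ≤ x.1 - b) then 1 else 0) m]
    rw [← Finset.card_filter]
    have hset : (Finset.range m).filter
        (fun b => (x.1 < b ∧ b - x.1 ≤ k) ∨ (b < x.1 ∧ k + 1 ≤ x.1 - b)) =
        Finset.Ico (x.1 + 1) (min (x.1 + k + 1) m) ∪ Finset.range (x.1 - k) := by
      ext b
      simp only [Finset.mem_filter, Finset.mem_range, Finset.mem_union, Finset.mem_Ico]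
      omega
    rw [hset, Finset.card_union_of_disjoint, Nat.card_Ico, Finset.card_range]
    · omega
    · rw [Finset.disjoint_left]
      intro b hb hb'
      simp only [Finset.mem_Ico] at hb
      simp only [Finset.mem_range] at hb'
      omega
  refine ⟨u, hscore, ?_⟩
  ext z
  simp only [copelandSet, Finset.mem_filter, Finset.mem_univ, true_and, iff_true]
  intro w
  rw [hscore w, hscore z]
end

section
/- Let S be a subset of X with |S| = k ≥ 1. If k ≥ n, then there exist a profile u and an index vector b of gauge ⌈k/n⌉ such that the set of approval voting winners G_A(u,b) is exactly S. -/
/-! Number the `k` alternatives of `S` by `0, …, k - 1` and let voter `i` rank first, and approve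
exactly, those whose number is `≡ i (mod n)`. Every alternative of `S` is then approved by exactly
one voter and every other alternative by none, so the winners are `S`. Voter `i` approves
`⌈(k - i) / n⌉` alternatives: at least one because `i < n ≤ k`, and most for `i = 0`. -/

open Finset

/-- The approval voting score `A_S(x,u,b)`: the number of individuals `i` who
have `x` among the top `b i` ranks of their ordering.  A profile assigns to
each individual `i` a rank equivalence `u i : Fin m ≃ Fin m` (rank `0` is the
top), so `x` is among the top `b i` alternatives of `u i` iff
`((u i) x).val < b i`. -/
def approvalScore {m n : ℕ} (u : Fin n → (Fin m ≃ Fin m)) (b : Fin n → ℕ)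
    (x : Fin m) : ℕ :=
  (univ.filter (fun i : Fin n => ((u i) x).val < b i)).card

/-- The approval voting choice set `G_A(u,b)`: alternatives with maximal
approval voting score. -/
def approvalSet {m n : ℕ} (u : Fin n → (Fin m ≃ Fin m)) (b : Fin n → ℕ) :
    Finset (Fin m) :=
  univ.filter (fun x => ∀ y : Fin m, approvalScore u b y ≤ approvalScore u b x)

lemma exists_equiv_lt_card_iff {m : ℕ} (T : Finset (Fin m)) :
    ∃ σ : Fin m ≃ Fin m, ∀ x, (σ x : ℕ) < #T ↔ x ∈ T := by
  let e : {x // x ∈ T} ≃ {y : Fin m // (y : ℕ) < #T} :=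
    T.equivFin.trans (Fin.castLEquiv (card_finset_fin_le T))
  refine ⟨e.extendSubtype, fun x => ⟨fun hx => ?_, e.extendSubtype_mem x⟩⟩
  by_contra hxT
  exact e.extendSubtype_not_mem x hxT hx

lemma Finset.exists_card_filter_eq_count {α : Type*} (S : Finset α) :
    ∃ r : α → ℕ, ∀ (p : ℕ → Prop) [DecidablePred p], #{x ∈ S | p (r x)} = Nat.count p #S := by
  classical
  refine ⟨fun x => if hx : x ∈ S then S.equivFin ⟨x, hx⟩ else 0, fun p _ => ?_⟩
  rw [Nat.count_eq_card_filter_range]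
  refine card_bij (fun x hx => S.equivFin ⟨x, (mem_filter.1 hx).1⟩) ?_ ?_ ?_
  · intro x hx
    obtain ⟨hxS, hp⟩ := mem_filter.1 hx
    simpa [hxS] using hp
  · intro x _ y _ hxy
    simpa using S.equivFin.injective (Fin.ext hxy)
  · intro j hj
    simp only [mem_filter, mem_range] at hj
    refine ⟨S.equivFin.symm ⟨j, hj.1⟩, ?_, by simp⟩
    simp [hj.2]

lemma Finset.exists_fiber_card_eq_ceil {α : Type*} (S : Finset α) {n : ℕ} (hn : 0 < n) :
    ∃ g : α → Fin n, ∀ i : Fin n, (#{x ∈ S | g x = i} : ℤ) = ⌈((#S : ℚ) - i) / n⌉ := by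
  obtain ⟨r, hr⟩ := S.exists_card_filter_eq_count
  refine ⟨fun x => ⟨r x % n, Nat.mod_lt _ hn⟩, fun i => ?_⟩
  have hmod : ∀ x, (⟨r x % n, Nat.mod_lt _ hn⟩ : Fin n) = i ↔ r x ≡ i [MOD n] := by
    intro x
    rw [Fin.ext_iff, Nat.ModEq, Nat.mod_eq_of_lt i.is_lt]
  rw [filter_congr fun x _ => hmod x, hr (· ≡ i [MOD n]), Nat.count_modEq_card_eq_ceil _ hn,
    Nat.mod_eq_of_lt i.is_lt]

section
variable {m n : ℕ} {u : Fin n → (Fin m ≃ Fin m)} {b : Fin n → ℕ}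

lemma approvalScore_eq_of_approves_fibers {S : Finset (Fin m)} {g : Fin m → Fin n}
    (hu : ∀ i x, (u i x : ℕ) < b i ↔ x ∈ S ∧ g x = i) (x : Fin m) :
    approvalScore u b x = if x ∈ S then 1 else 0 := by
  simp only [approvalScore, hu]
  split_ifs with hx <;> simp [hx, filter_eq]

lemma approvalSet_eq_of_approves_fibers {S : Finset (Fin m)} (hS : S.Nonempty)
    {g : Fin m → Fin n}
    (hu : ∀ i x, (u i x : ℕ) < b i ↔ x ∈ S ∧ g x = i) : approvalSet u b = S := by
  obtain ⟨s, hs⟩ := hS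
  ext x
  simp only [approvalSet, mem_filter, mem_univ, true_and, approvalScore_eq_of_approves_fibers hu]
  refine ⟨fun h => ?_, fun hx y => ?_⟩
  · by_contra hx
    simpa [hs, hx] using h s
  · simp only [hx]; split_ifs <;> omega

end

theorem approval_range_k_ge_n_general (m n : ℕ) (hn : 2 ≤ n)
    (S : Finset (Fin m)) (k : ℕ) (hcard : S.card = k) (hkn : n ≤ k) :
    ∃ (u : Fin n → (Fin m ≃ Fin m)) (b : Fin n → ℕ),
      (∀ i : Fin n, 1 ≤ b i ∧ b i ≤ m) ∧
      (((univ.sup b : ℕ) : ℤ) = ⌈(k : ℚ) / (n : ℚ)⌉) ∧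
      approvalSet u b = S := by
  have hn0 : 0 < n := by omega
  obtain ⟨g, hg⟩ := S.exists_fiber_card_eq_ceil hn0
  let T i := {x ∈ S | g x = i}
  choose u hu using fun i => exists_equiv_lt_card_iff (T i)
  have hb : ∀ i, (#(T i) : ℤ) = ⌈((k : ℚ) - i) / n⌉ := hcard ▸ hg
  have hb_le : ∀ i, #(T i) ≤ #(T ⟨0, hn0⟩) := fun i => by
    have : ((k : ℚ) - i) / n ≤ ((k : ℚ) - (⟨0, hn0⟩ : Fin n)) / n := by gcongr; simp
    exact_mod_cast (hb i).trans_le ((Int.ceil_mono this).trans_eq (hb ⟨0, hn0⟩).symm)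
  have hsup : univ.sup (fun i => #(T i)) = #(T ⟨0, hn0⟩) :=
    le_antisymm (Finset.sup_le fun i _ => hb_le i) (le_sup (f := fun i => #(T i)) (mem_univ _))
  refine ⟨u, fun i => #(T i), fun i => ⟨?_, card_finset_fin_le _⟩, ?_, ?_⟩
  · have hi : (i : ℚ) < k := by exact_mod_cast i.is_lt.trans_le hkn
    have : 0 < ((k : ℚ) - i) / n := div_pos (sub_pos.2 hi) (by positivity)
    exact_mod_cast (Int.one_le_ceil_iff.2 this).trans_eq (hb i).symm
  · rw [hsup, hb]
    simp
  · exact approvalSet_eq_of_approves_fibers (card_pos.1 (by omega))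
      fun i x => (hu i x).trans mem_filter

/-- If `S ⊆ X` with `|S| = k ≥ 1` and `k ≥ n`, then there are a profile `u`
and an index vector `b` (each component in `{1,…,m}`) of gauge `⌈k/n⌉` with
`G_A(u,b) = S`. -/
theorem approval_range_k_ge_n (m n : ℕ) (hm : 3 ≤ m) (hn : 2 ≤ n)
    (S : Finset (Fin m)) (k : ℕ) (hcard : S.card = k) (hk : 1 ≤ k) (hkn : n ≤ k) :
    ∃ (u : Fin n → (Fin m ≃ Fin m)) (b : Fin n → ℕ),
      (∀ i : Fin n, 1 ≤ b i ∧ b i ≤ m) ∧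
      (((univ.sup b : ℕ) : ℤ) = ⌈(k : ℚ) / (n : ℚ)⌉) ∧
      approvalSet u b = S :=
  approval_range_k_ge_n_general m n hn S k hcard hkn
end
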